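/- Let p_n = (log n)/n and let q_n be any sequence with 0 ≤ q_n ≤ p_n. Then there is a constant c > 0 such that P(n, p_n, q_n) ≥ c/n for all sufficiently large n; in particular, n · P(n, p_n, q_n) does not tend to 0. -/

import Mathlib

open Real Filter

/-- Probability that a Binomial(m, p) random variable equals `k`. -/
noncomputable def binomProb (m : ℕ) (p : ℝ) (k : ℕ) : ℝ :=
  (m.choose k : ℝ) * p ^ k * (1 - p) ^ (m - k)

/-- For independent `X ~ Binomial(m, p)` and `Y ~ Binomial(n, q)`,
the probability `Pr(Y ≥ X - ℓ)`. -/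
noncomputable def prGEshift (m : ℕ) (p : ℝ) (n : ℕ) (q : ℝ) (ℓ : ℝ) : ℝ :=
  ∑ j ∈ Finset.range (m + 1), ∑ k ∈ Finset.range (n + 1),
    if (j : ℝ) - ℓ ≤ (k : ℝ) then binomProb m p j * binomProb n q k else 0

/-- For independent `X ~ Binomial(m, p)` and `Y ~ Binomial(n, q)`,
the probability `Pr(Y ≥ X)`. -/
noncomputable def prGE (m : ℕ) (p : ℝ) (n : ℕ) (q : ℝ) : ℝ :=
  prGEshift m p n q 0

/-- `P(m, n, p, q) = Pr(Y ≥ X)` for independent `X ~ Binomial(m, max p q)`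
and `Y ~ Binomial(n, min p q)`. -/
noncomputable def Pmn (m n : ℕ) (p q : ℝ) : ℝ :=
  prGE m (max p q) n (min p q)

/-- `P(n, p, q) = P(n, n, p, q)`. -/
noncomputable def Pn (n : ℕ) (p q : ℝ) : ℝ :=
  Pmn n n p q

/-!
On the event `X = 0` we have `Y ≥ X`, so `P(n, p, q) ≥ (1 - p)ⁿ`. Since
`log (1 - p) ≥ -p / (1 - p)`, this is at least `exp (-n p / (1 - p))`, and for `p = log n / n`
the exponent is `log n` plus `(log n) p / (1 - p) = O((log n)² / n) = o(1)`.
Hence `P(n, p_n, q_n) ≥ e⁻¹ / n` for large `n`.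
-/

open Finset Topology

lemma binomProb_nonneg {m : ℕ} {p : ℝ} (hp₀ : 0 ≤ p) (hp₁ : p ≤ 1) (k : ℕ) :
    0 ≤ binomProb m p k := by
  have : 0 ≤ 1 - p := by linarith
  unfold binomProb
  positivity

lemma sum_binomProb (n : ℕ) (q : ℝ) : ∑ k ∈ range (n + 1), binomProb n q k = 1 := by
  have h := add_pow q (1 - q) n
  rw [add_sub_cancel, one_pow] at h
  rw [h]
  exact sum_congr rfl fun k _ => by unfold binomProb; ring

lemma binomProb_zero (m : ℕ) (p : ℝ) : binomProb m p 0 = (1 - p) ^ m := by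
  simp [binomProb]

lemma one_sub_pow_le_prGE (m n : ℕ) {p q : ℝ} (hp₀ : 0 ≤ p) (hp₁ : p ≤ 1)
    (hq₀ : 0 ≤ q) (hq₁ : q ≤ 1) : (1 - p) ^ m ≤ prGE m p n q := by
  have hterm : ∀ j k : ℕ, 0 ≤ if (j : ℝ) - 0 ≤ k then binomProb m p j * binomProb n q k else 0 :=
    fun j k => by
      split
      · exact mul_nonneg (binomProb_nonneg hp₀ hp₁ j) (binomProb_nonneg hq₀ hq₁ k)
      · exact le_rfl
  calc (1 - p) ^ m = ∑ k ∈ range (n + 1), binomProb m p 0 * binomProb n q k := by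
        rw [← mul_sum, sum_binomProb, mul_one, binomProb_zero]
    _ = ∑ k ∈ range (n + 1),
          if ((0 : ℕ) : ℝ) - 0 ≤ k then binomProb m p 0 * binomProb n q k else 0 :=
        sum_congr rfl fun k _ => by rw [if_pos (by simp)]
    _ ≤ prGE m p n q :=
        single_le_sum (f := fun j : ℕ => ∑ k ∈ range (n + 1),
            if (j : ℝ) - 0 ≤ k then binomProb m p j * binomProb n q k else 0)
          (fun j _ => sum_nonneg fun k _ => hterm j k) (mem_range.2 m.succ_pos)

lemma Pn_eq_prGE_of_le {n : ℕ} {p q : ℝ} (h : q ≤ p) : Pn n p q = prGE n p n q := by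
  rw [Pn, Pmn, max_eq_left h, min_eq_right h]

lemma exp_neg_mul_div_le_one_sub_pow {p : ℝ} (hp : p < 1) (n : ℕ) :
    exp (-(n * (p / (1 - p)))) ≤ (1 - p) ^ n := by
  have h₀ : 0 < 1 - p := by linarith
  have hlog : -(p / (1 - p)) ≤ log (1 - p) := by
    convert one_sub_inv_le_log_of_pos h₀ using 1
    field_simp
    ring
  rw [← exp_log (pow_pos h₀ n), log_pow, ← mul_neg]
  exact exp_le_exp.2 (mul_le_mul_of_nonneg_left hlog n.cast_nonneg)

lemma log_div_self_nonneg (n : ℕ) : 0 ≤ log n / n :=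
  div_nonneg (log_natCast_nonneg n) n.cast_nonneg

lemma log_div_self_lt_one (n : ℕ) : log n / n < 1 := by
  rcases Nat.eq_zero_or_pos n with rfl | hn
  · simp
  · have hn₀ : (0 : ℝ) < n := by exact_mod_cast hn
    rw [div_lt_one hn₀]
    linarith [log_le_sub_one_of_pos hn₀]

lemma tendsto_pow_log_div_self_atTop (k : ℕ) :
    Tendsto (fun n : ℕ => log n ^ k / n) atTop (𝓝 0) := by
  simpa [Function.comp_def] using
    (tendsto_pow_log_div_mul_add_atTop 1 0 k one_ne_zero).comp tendsto_natCast_atTop_atTop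

lemma eventually_exp_neg_one_div_le_one_sub_log_div_self_pow :
    ∀ᶠ n : ℕ in atTop, exp (-1) / n ≤ (1 - log n / n) ^ n := by
  have hhalf : (0 : ℝ) < 1 / 2 := by norm_num
  filter_upwards [(tendsto_pow_log_div_self_atTop 1).eventually (eventually_le_nhds hhalf),
    (tendsto_pow_log_div_self_atTop 2).eventually (eventually_le_nhds hhalf),
    eventually_gt_atTop 0] with n hp hsq hn
  rw [pow_one] at hp
  set p := log n / n with hp_def
  have hn₀ : (0 : ℝ) < n := by exact_mod_cast hn
  have hp₁ : 0 < 1 - p := by linarith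
  have hexcess : log n * (p / (1 - p)) ≤ 1 := by
    have : log n * p ≤ 1 / 2 := by
      calc log n * p = log n ^ 2 / n := by rw [hp_def]; ring
        _ ≤ 1 / 2 := hsq
    rw [← mul_div_assoc, div_le_one hp₁]
    linarith
  have hsplit : n * (p / (1 - p)) = log n + log n * (p / (1 - p)) := by
    have hnp : n * p = log n := by rw [hp_def]; field_simp
    rw [← mul_div_assoc, hnp]
    field_simp
    ring
  calc exp (-1) / n = exp (-(log n + 1)) := by
        rw [neg_add, exp_add, exp_neg (log n), exp_log hn₀]
        ring
    _ ≤ exp (-(n * (p / (1 - p)))) := exp_le_exp.2 (by linarith)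
    _ ≤ (1 - p) ^ n := exp_neg_mul_div_le_one_sub_pow (log_div_self_lt_one n) n

lemma not_tendsto_natCast_mul_zero_of_eventually_div_le {f : ℕ → ℝ} {c : ℝ} (hc : 0 < c)
    (h : ∀ᶠ n : ℕ in atTop, c / n ≤ f n) :
    ¬Tendsto (fun n : ℕ => (n : ℝ) * f n) atTop (𝓝 0) := fun ht => by
  obtain ⟨n, hle, hlt, hn⟩ :=
    (h.and ((ht.eventually (gt_mem_nhds hc)).and (eventually_gt_atTop 0))).exists
  rw [div_le_iff₀' (by exact_mod_cast hn)] at hle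
  exact hlt.not_ge hle

theorem log_over_n_not_strongly_consistent
    (q : ℕ → ℝ) (hq : ∀ n : ℕ, 0 ≤ q n ∧ q n ≤ Real.log n / n) :
    (∃ c : ℝ, 0 < c ∧ ∀ᶠ n : ℕ in atTop,
        c / n ≤ Pn n (Real.log n / n) (q n)) ∧
      ¬ Tendsto (fun n : ℕ => (n : ℝ) * Pn n (Real.log n / n) (q n))
          atTop (nhds 0) := by
  have hlower : ∀ᶠ n : ℕ in atTop, exp (-1) / n ≤ Pn n (log n / n) (q n) := by
    filter_upwards [eventually_exp_neg_one_div_le_one_sub_log_div_self_pow] with n hn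
    have hp₁ := (log_div_self_lt_one n).le
    rw [Pn_eq_prGE_of_le (hq n).2]
    exact hn.trans <| one_sub_pow_le_prGE n n (log_div_self_nonneg n) hp₁ (hq n).1
      ((hq n).2.trans hp₁)
  exact ⟨⟨exp (-1), exp_pos _, hlower⟩,
    not_tendsto_natCast_mul_zero_of_eventually_div_le (exp_pos _) hlower⟩
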